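/- Let θ be a nonconstant inner function, u, v ∈ H^2 with ‖u‖ = 1, and suppose θ divides u (i.e., u ∈ θH^2) and 1 + ⟨θv, u⟩ = 0. Then the kernel of R₁ f = T_{θ̄} f + ⟨f, u⟩ v equals K_θ ⊕ ℂ(θv), and it is nearly S*-invariant with 1-dimensional defect space F = ℂ·(θ S*v) (assuming S*v ≠ 0). -/

import Mathlib

open MeasureTheory Complex Real ComplexConjugate
open scoped ENNReal

noncomputable section

instance : Fact (0 < 2 * π) := ⟨by positivity⟩

/-- The unit circle, modelled as `ℝ / 2πℤ`. -/
abbrev UnitCircle : Type := AddCircle (2 * π)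

/-- Normalized Haar (Lebesgue) measure on the circle. -/
abbrev μc : Measure UnitCircle := AddCircle.haarAddCircle

/-- The space `L²(𝕋)`. -/
abbrev L2T : Type := Lp ℂ 2 μc

/-- The Hardy space `H²`, the closed span of `{eⁱⁿᵗ : n ≥ 0}` inside `L²(𝕋)`. -/
def H2 : Submodule ℂ L2T :=
  (Submodule.span ℂ (Set.range fun n : ℕ => (fourierLp 2 (n : ℤ) : L2T))).topologicalClosure

instance : CompleteSpace H2 :=
  IsClosed.completeSpace_coe (hs := Submodule.isClosed_topologicalClosure _)

/-- The orthogonal projection `P : L²(𝕋) → H²`. -/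
def PH2 : L2T →L[ℂ] H2 := H2.orthogonalProjectionOnto

/-- Multiplication of an `L²` function by an essentially bounded symbol. -/
def symbMul (g : UnitCircle → ℂ) (hg : MemLp g ∞ μc) (f : L2T) : L2T :=
  ((Lp.memLp f).smul hg).toLp (g • ⇑f)

/-- The Toeplitz operator `T_g f = P(gf)`, viewed as a map `L²(𝕋) → L²(𝕋)`
(its restriction to `H²` is the classical Toeplitz operator). -/
def Toeplitz (g : UnitCircle → ℂ) (hg : MemLp g ∞ μc) (f : L2T) : L2T :=
  (PH2 (symbMul g hg f) : L2T)

/-- The boundary coordinate function `z = eⁱᵗ` on the circle. -/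
def zfun : UnitCircle → ℂ := fun x => fourier 1 x

lemma zfun_memLinfty : MemLp zfun ∞ μc := by
  refine memLp_top_of_bound ((fourier 1).continuous.aestronglyMeasurable) 1 ?_
  filter_upwards with x
  simp [zfun, Circle.norm_coe]

lemma conj_zfun_memLinfty : MemLp (fun x => conj (zfun x)) ∞ μc := by
  refine memLp_top_of_bound (Continuous.aestronglyMeasurable (Complex.continuous_conj.comp ((fourier 1).continuous))) 1 ?_
  filter_upwards with x
  simp [zfun, Circle.norm_coe]

/-- The backward shift `S* = T_{z̄}` on `L²`; its restriction to `H²` is the classical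
backward shift `(S^*f)(z) = (f(z)-f(0))/z`. -/
def Sstar (f : L2T) : L2T := Toeplitz (fun x => conj (zfun x)) conj_zfun_memLinfty f

/-- Evaluation of (the analytic extension of) `f` at the origin: the mean value `f(0) = ∫ f`. -/
def ev0 (f : L2T) : ℂ := ∫ x, f x ∂μc

/-- The constant function `1` as an element of `L²(𝕋)` (it is `e⁰`). -/
def onefun : L2T := fourierLp 2 (0 : ℤ)

lemma zpow_memLinfty (m : ℕ) : MemLp (fun x => zfun x ^ m) ∞ μc := by
  refine memLp_top_of_bound (Continuous.aestronglyMeasurable (by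
    exact Continuous.pow (fourier 1).continuous m)) 1 ?_
  filter_upwards with x
  simp [zfun, Circle.norm_coe]

/-- An essentially bounded symbol is in particular square-integrable: the associated `L²`
element. -/
def toL2 (g : UnitCircle → ℂ) (hg : MemLp g ∞ μc) : L2T :=
  (hg.mono_exponent le_top).toLp g

/-- A bounded symbol `g` is *analytic* (i.e. belongs to `H^∞`) iff multiplication by `g`
preserves the Hardy space `H²`. -/
def IsAnalytic (g : UnitCircle → ℂ) (hg : MemLp g ∞ μc) : Prop :=
  ∀ f : L2T, f ∈ H2 → symbMul g hg f ∈ H2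

/-- A bounded symbol is *inner* if it is analytic and unimodular a.e. on the circle. -/
def IsInner (g : UnitCircle → ℂ) (hg : MemLp g ∞ μc) : Prop :=
  IsAnalytic g hg ∧ ∀ᵐ x ∂μc, ‖g x‖ = 1

/-- The subspace `θ·H²` of `L²(𝕋)`. -/
def mulH2 (θ : UnitCircle → ℂ) (hθ : MemLp θ ∞ μc) : Submodule ℂ L2T :=
  Submodule.span ℂ {f : L2T | ∃ h ∈ H2, f = symbMul θ hθ h}

/-- The model space `K_θ = H² ⊖ θH²`. -/
def Kmodel (θ : UnitCircle → ℂ) (hθ : MemLp θ ∞ μc) : Submodule ℂ L2T :=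
  H2 ⊓ (mulH2 θ hθ)ᗮ

instance (θ : UnitCircle → ℂ) (hθ : MemLp θ ∞ μc) : CompleteSpace (Kmodel θ hθ) := by
  refine IsClosed.completeSpace_coe (hs := ?_)
  have : ((Kmodel θ hθ : Submodule ℂ L2T) : Set L2T)
      = (H2 : Set L2T) ∩ ((mulH2 θ hθ)ᗮ : Set L2T) := rfl
  rw [this]
  exact (Submodule.isClosed_topologicalClosure _).inter (Submodule.isClosed_orthogonal _)

/-- An element `u ∈ H²` is *outer* if the polynomial multiples of `u` are dense in `H²`
(Beurling). -/
def IsOuterL2 (uL : L2T) : Prop :=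
  (Submodule.span ℂ
    (Set.range fun n : ℕ => symbMul (fun x => zfun x ^ n) (zpow_memLinfty n) uL)).topologicalClosure
    = H2

open scoped ComplexInnerProductSpace

instance (U : Submodule ℂ L2T) : CompleteSpace (H2 ⊓ Uᗮ : Submodule ℂ L2T) := by
  refine IsClosed.completeSpace_coe (hs := ?_)
  have : ((H2 ⊓ Uᗮ : Submodule ℂ L2T) : Set L2T) = (H2 : Set L2T) ∩ (Uᗮ : Set L2T) := rfl
  rw [this]
  exact (Submodule.isClosed_topologicalClosure _).inter (Submodule.isClosed_orthogonal _)

/-! ### Auxiliary lemmas -/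

section Aux

/-- The `n`-th Fourier coefficient as an inner product. -/
def coefI (n : ℤ) (f : L2T) : ℂ := ⟪(fourierLp 2 n : L2T), f⟫

lemma coefI_eq_repr (n : ℤ) (f : L2T) : coefI n f = fourierBasis.repr f n := by
  rw [fourierBasis.repr_apply_apply, coe_fourierBasis]; rfl

lemma coefI_fourierLp (n m : ℤ) : coefI n ((fourierLp 2 m : L2T)) = if n = m then 1 else 0 := by
  have h := orthonormal_iff_ite.mp (orthonormal_fourier (T := 2 * π)) n m
  simpa [coefI] using h

lemma coefI_add (n : ℤ) (f g : L2T) : coefI n (f + g) = coefI n f + coefI n g :=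
  inner_add_right _ _ _

lemma coefI_smul (n : ℤ) (c : ℂ) (f : L2T) : coefI n (c • f) = c * coefI n f :=
  inner_smul_right _ _ _

lemma coefI_sub (n : ℤ) (f g : L2T) : coefI n (f - g) = coefI n f - coefI n g :=
  inner_sub_right _ _ _

/-- Membership in `H²` in terms of vanishing of negative Fourier coefficients. -/
lemma memH2_iff {f : L2T} : f ∈ H2 ↔ ∀ n : ℤ, n < 0 → coefI n f = 0 := by
  constructor
  · intro hf n hn
    have hker : H2 ≤ LinearMap.ker (((innerSL ℂ ((fourierLp 2 n : L2T))) :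
        L2T →L[ℂ] ℂ) : L2T →ₗ[ℂ] ℂ) := by
      apply Submodule.topologicalClosure_minimal
      · rw [Submodule.span_le]
        rintro x ⟨m, rfl⟩
        have : coefI n ((fourierLp 2 (m : ℤ) : L2T)) = 0 := by
          rw [coefI_fourierLp]
          have : n ≠ (m : ℤ) := by omega
          simp [this]
        simpa [LinearMap.mem_ker, coefI] using this
      · exact (ContinuousLinearMap.isClosed_ker _)
    have := hker hf
    simpa [LinearMap.mem_ker, coefI] using this
  · intro h
    have hs := hasSum_fourier_series_L2 f
    have hcoef : ∀ i : ℤ, fourierCoeff (f : UnitCircle → ℂ) i = coefI i f := by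
      intro i; rw [coefI_eq_repr, fourierBasis_repr]
    refine IsClosed.mem_of_tendsto (Submodule.isClosed_topologicalClosure _) hs
      (Filter.Eventually.of_forall fun s => ?_)
    refine Submodule.sum_mem _ fun i _ => ?_
    rcases lt_or_ge i 0 with hi | hi
    · rw [hcoef, h i hi, zero_smul]; exact Submodule.zero_mem _
    · refine Submodule.smul_mem _ _ ?_
      apply Submodule.le_topologicalClosure
      apply Submodule.subset_span
      exact ⟨i.toNat, by simp [hi]⟩

/-- Inner product on `L²` is the usual integral. -/
lemma L2inner_eq (f g : L2T) : ⟪f, g⟫ = ∫ x, conj (f x) * g x ∂μc := by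
  rw [MeasureTheory.L2.inner_def]
  simp only [RCLike.inner_apply]
  exact integral_congr_ae (Filter.Eventually.of_forall fun x => mul_comm _ _)

lemma symbMul_coeFn (g : UnitCircle → ℂ) (hg : MemLp g ∞ μc) (f : L2T) :
    symbMul g hg f =ᵐ[μc] fun x => g x * f x := by
  filter_upwards [MemLp.coeFn_toLp ((Lp.memLp f).smul (r := 2) hg)] with x hx
  simpa [symbMul, Pi.smul_apply, smul_eq_mul] using hx

lemma symbMul_add (g : UnitCircle → ℂ) (hg : MemLp g ∞ μc) (f₁ f₂ : L2T) :
    symbMul g hg (f₁ + f₂) = symbMul g hg f₁ + symbMul g hg f₂ := by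
  apply Lp.ext
  filter_upwards [symbMul_coeFn g hg (f₁ + f₂), symbMul_coeFn g hg f₁, symbMul_coeFn g hg f₂,
    Lp.coeFn_add f₁ f₂, Lp.coeFn_add (symbMul g hg f₁) (symbMul g hg f₂)] with x h1 h2 h3 h4 h5
  simp only [h1, h5, Pi.add_apply, h2, h3, h4]
  ring

lemma symbMul_smul (g : UnitCircle → ℂ) (hg : MemLp g ∞ μc) (c : ℂ) (f : L2T) :
    symbMul g hg (c • f) = c • symbMul g hg f := by
  apply Lp.ext
  filter_upwards [symbMul_coeFn g hg (c • f), symbMul_coeFn g hg f,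
    Lp.coeFn_smul c f, Lp.coeFn_smul c (symbMul g hg f)] with x h1 h2 h3 h4
  simp only [h1, h4, Pi.smul_apply, h2, h3, smul_eq_mul]
  ring

lemma symbMul_zero (g : UnitCircle → ℂ) (hg : MemLp g ∞ μc) :
    symbMul g hg 0 = 0 := by
  have := symbMul_smul g hg 0 0
  simpa using this

/-- The symbol-multiplication linear map. -/
def symbMulLM (g : UnitCircle → ℂ) (hg : MemLp g ∞ μc) : L2T →ₗ[ℂ] L2T where
  toFun := symbMul g hg
  map_add' := symbMul_add g hg
  map_smul' := symbMul_smul g hg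

lemma symbMul_congr {g g' : UnitCircle → ℂ} {hg : MemLp g ∞ μc} {hg' : MemLp g' ∞ μc}
    (h : g =ᵐ[μc] g') (f : L2T) : symbMul g hg f = symbMul g' hg' f := by
  apply Lp.ext
  filter_upwards [symbMul_coeFn g hg f, symbMul_coeFn g' hg' f, h] with x h1 h2 h3
  rw [h1, h2, h3]

lemma symbMul_symbMul (g g' : UnitCircle → ℂ) (hg : MemLp g ∞ μc) (hg' : MemLp g' ∞ μc)
    (hgg' : MemLp (fun x => g x * g' x) ∞ μc) (f : L2T) :
    symbMul g hg (symbMul g' hg' f) = symbMul (fun x => g x * g' x) hgg' f := by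
  apply Lp.ext
  filter_upwards [symbMul_coeFn g hg (symbMul g' hg' f), symbMul_coeFn g' hg' f,
    symbMul_coeFn (fun x => g x * g' x) hgg' f] with x h1 h2 h3
  rw [h1, h2, h3]; ring

/-- Adjoint property of multiplication operators. -/
lemma inner_symbMul_left (g : UnitCircle → ℂ) (hg : MemLp g ∞ μc)
    (hgc : MemLp (fun x => conj (g x)) ∞ μc) (f h : L2T) :
    ⟪symbMul g hg f, h⟫ = ⟪f, symbMul (fun x => conj (g x)) hgc h⟫ := by
  rw [L2inner_eq, L2inner_eq]
  apply integral_congr_ae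
  filter_upwards [symbMul_coeFn g hg f, symbMul_coeFn (fun x => conj (g x)) hgc h]
    with x h1 h2
  rw [h1, h2]
  simp only [map_mul]
  ring

lemma coefI_eq_integral (n : ℤ) (f : L2T) :
    coefI n f = ∫ x, fourier (-n) x * f x ∂μc := by
  rw [coefI, L2inner_eq]
  apply integral_congr_ae
  filter_upwards [coeFn_fourierLp (T := 2 * π) 2 n] with x hx
  rw [hx, ← fourier_neg]

lemma coefI_symbMul_z (n : ℤ) (f : L2T) :
    coefI n (symbMul zfun zfun_memLinfty f) = coefI (n - 1) f := by
  rw [coefI_eq_integral, coefI_eq_integral]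
  apply integral_congr_ae
  filter_upwards [symbMul_coeFn zfun zfun_memLinfty f] with x hx
  rw [hx, ← mul_assoc]
  congr 1
  rw [zfun, ← fourier_add]
  congr 1
  ring

lemma coefI_symbMul_zbar (n : ℤ) (f : L2T) :
    coefI n (symbMul (fun x => conj (zfun x)) conj_zfun_memLinfty f) = coefI (n + 1) f := by
  rw [coefI_eq_integral, coefI_eq_integral]
  apply integral_congr_ae
  filter_upwards [symbMul_coeFn (fun x => conj (zfun x)) conj_zfun_memLinfty f] with x hx
  rw [hx, ← mul_assoc]
  congr 1
  rw [zfun, ← fourier_neg, ← fourier_add]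
  congr 1
  ring

lemma mem_span_orthogonal_iff {S : Set L2T} {x : L2T} :
    x ∈ (Submodule.span ℂ S)ᗮ ↔ ∀ s ∈ S, ⟪s, x⟫ = 0 := by
  constructor
  · intro hx s hs
    exact (Submodule.mem_orthogonal _ _).1 hx s (Submodule.subset_span hs)
  · intro h
    rw [Submodule.mem_orthogonal]
    intro u hu
    induction hu using Submodule.span_induction with
    | mem s hs => exact h s hs
    | zero => exact inner_zero_left x
    | add a b _ _ ha hb => rw [inner_add_left, ha, hb, add_zero]
    | smul c a _ ha => rw [inner_smul_left, ha, mul_zero]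

lemma mem_H2_orthogonal {x : L2T} (hx : ∀ n : ℤ, 0 ≤ n → coefI n x = 0) : x ∈ H2ᗮ := by
  rw [Submodule.mem_orthogonal']
  intro v hv
  have hker : H2 ≤ LinearMap.ker (((innerSL ℂ x) : L2T →L[ℂ] ℂ) : L2T →ₗ[ℂ] ℂ) := by
    apply Submodule.topologicalClosure_minimal
    · rw [Submodule.span_le]
      rintro y ⟨m, rfl⟩
      have h0 : coefI (m : ℤ) x = 0 := hx m (Int.ofNat_nonneg m)
      have : ⟪x, ((fourierLp 2 (m : ℤ) : L2T))⟫ = 0 := by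
        rw [← inner_conj_symm]
        rw [coefI] at h0
        rw [h0, map_zero]
      simpa [LinearMap.mem_ker] using this
    · exact ContinuousLinearMap.isClosed_ker _
  simpa [LinearMap.mem_ker] using hker hv

lemma PH2_coe_mem (f : L2T) : (PH2 f : L2T) ∈ H2 := SetLike.coe_mem _

lemma PH2_eq_self {f : L2T} (hf : f ∈ H2) : (PH2 f : L2T) = f :=
  H2.starProjection_eq_self_iff.2 hf

lemma PH2_eq_zero {f : L2T} (hf : f ∈ H2ᗮ) : (PH2 f : L2T) = 0 := by
  rw [PH2, Submodule.orthogonalProjectionOnto_apply_of_mem_orthogonal hf,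
    ZeroMemClass.coe_zero]

lemma Toeplitz_mem_H2 (g : UnitCircle → ℂ) (hg : MemLp g ∞ μc) (f : L2T) :
    Toeplitz g hg f ∈ H2 := SetLike.coe_mem _

lemma Toeplitz_add (g : UnitCircle → ℂ) (hg : MemLp g ∞ μc) (f₁ f₂ : L2T) :
    Toeplitz g hg (f₁ + f₂) = Toeplitz g hg f₁ + Toeplitz g hg f₂ := by
  unfold Toeplitz
  rw [symbMul_add, map_add, Submodule.coe_add]

lemma Toeplitz_smul (g : UnitCircle → ℂ) (hg : MemLp g ∞ μc) (c : ℂ) (f : L2T) :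
    Toeplitz g hg (c • f) = c • Toeplitz g hg f := by
  unfold Toeplitz
  rw [symbMul_smul, _root_.map_smul, Submodule.coe_smul]

lemma unimodular_conj_mul {θ : UnitCircle → ℂ} {hθ : MemLp θ ∞ μc} (hin : IsInner θ hθ) :
    ∀ᵐ x ∂μc, conj (θ x) * θ x = 1 := by
  filter_upwards [hin.2] with x hx
  have : (starRingEnd ℂ) (θ x) * θ x = ((Complex.normSq (θ x) : ℝ) : ℂ) := by
    rw [mul_comm, Complex.mul_conj]
  rw [this]
  rw [Complex.normSq_eq_norm_sq, hx]
  norm_num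

lemma inner_symbMul_symbMul {θ : UnitCircle → ℂ} {hθ : MemLp θ ∞ μc} (hin : IsInner θ hθ)
    (f g : L2T) : ⟪symbMul θ hθ f, symbMul θ hθ g⟫ = ⟪f, g⟫ := by
  rw [L2inner_eq, L2inner_eq]
  apply integral_congr_ae
  filter_upwards [symbMul_coeFn θ hθ f, symbMul_coeFn θ hθ g, unimodular_conj_mul hin]
    with x h1 h2 h3
  rw [h1, h2, map_mul]
  calc conj (θ x) * conj (f x) * (θ x * g x)
      = (conj (θ x) * θ x) * (conj (f x) * g x) := by ring
    _ = conj (f x) * g x := by rw [h3, one_mul]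

lemma symbMul_conj_symbMul {θ : UnitCircle → ℂ} {hθ : MemLp θ ∞ μc}
    (hθc : MemLp (fun x => conj (θ x)) ∞ μc) (hin : IsInner θ hθ) (f : L2T) :
    symbMul (fun x => conj (θ x)) hθc (symbMul θ hθ f) = f := by
  apply Lp.ext
  filter_upwards [symbMul_coeFn (fun x => conj (θ x)) hθc (symbMul θ hθ f),
    symbMul_coeFn θ hθ f, unimodular_conj_mul hin] with x h1 h2 h3
  rw [h1, h2, ← mul_assoc, h3, one_mul]

lemma norm_symbMul {θ : UnitCircle → ℂ} {hθ : MemLp θ ∞ μc} (hin : IsInner θ hθ) (f : L2T) :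
    ‖symbMul θ hθ f‖ = ‖f‖ := by
  have h : RCLike.re ⟪symbMul θ hθ f, symbMul θ hθ f⟫ = RCLike.re ⟪f, f⟫ :=
    congrArg RCLike.re (inner_symbMul_symbMul hin f f)
  rw [@inner_self_eq_norm_sq ℂ, @inner_self_eq_norm_sq ℂ] at h
  nlinarith [norm_nonneg (symbMul θ hθ f), norm_nonneg f]

lemma mulH2_eq_map (θ : UnitCircle → ℂ) (hθ : MemLp θ ∞ μc) :
    mulH2 θ hθ = Submodule.map (symbMulLM θ hθ) H2 := by
  unfold mulH2
  have hset : {f : L2T | ∃ h ∈ H2, f = symbMul θ hθ h}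
      = (symbMulLM θ hθ) '' (H2 : Set L2T) := by
    ext x
    simp only [Set.mem_setOf_eq, Set.mem_image, SetLike.mem_coe]
    constructor
    · rintro ⟨h, hh, rfl⟩; exact ⟨h, hh, rfl⟩
    · rintro ⟨h, hh, rfl⟩; exact ⟨h, hh, rfl⟩
  rw [hset, Submodule.span_image, Submodule.span_eq]

lemma mem_mulH2 {θ : UnitCircle → ℂ} {hθ : MemLp θ ∞ μc} {f : L2T} (hf : f ∈ H2) :
    symbMul θ hθ f ∈ mulH2 θ hθ :=
  Submodule.subset_span ⟨f, hf, rfl⟩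

lemma mulH2_le_H2 {θ : UnitCircle → ℂ} {hθ : MemLp θ ∞ μc} (hin : IsInner θ hθ) :
    mulH2 θ hθ ≤ H2 := by
  rw [mulH2_eq_map]
  rintro x ⟨g, hg, rfl⟩
  exact hin.1 g hg

lemma isClosed_mulH2 {θ : UnitCircle → ℂ} {hθ : MemLp θ ∞ μc} (hin : IsInner θ hθ) :
    IsClosed ((mulH2 θ hθ : Submodule ℂ L2T) : Set L2T) := by
  have hiso : Isometry (symbMul θ hθ) := by
    apply Isometry.of_dist_eq
    intro f g
    rw [dist_eq_norm, dist_eq_norm]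
    have : symbMul θ hθ f - symbMul θ hθ g = symbMul θ hθ (f - g) := by
      have := symbMul_add θ hθ (f - g) g
      rw [sub_add_cancel] at this
      rw [this]; abel
    rw [this, norm_symbMul hin]
  have hcs : IsComplete ((H2 : Submodule ℂ L2T) : Set L2T) :=
    (Submodule.isClosed_topologicalClosure _).isComplete
  have himg : IsComplete (symbMul θ hθ '' ((H2 : Submodule ℂ L2T) : Set L2T)) :=
    (isComplete_image_iff hiso.isUniformInducing).2 hcs
  have : ((mulH2 θ hθ : Submodule ℂ L2T) : Set L2T)
      = symbMul θ hθ '' ((H2 : Submodule ℂ L2T) : Set L2T) := by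
    rw [mulH2_eq_map]; rfl
  rw [this]
  exact himg.isClosed

/-- Orthogonal decomposition `H² = K_θ ⊕ θH²`. -/
lemma H2_decomp {θ : UnitCircle → ℂ} {hθ : MemLp θ ∞ μc} (hin : IsInner θ hθ)
    {h : L2T} (hh : h ∈ H2) :
    ∃ k g, k ∈ Kmodel θ hθ ∧ g ∈ H2 ∧ h = k + symbMul θ hθ g := by
  haveI : CompleteSpace (mulH2 θ hθ) := (isClosed_mulH2 hin).completeSpace_coe
  set p := ((mulH2 θ hθ).orthogonalProjectionOnto h : L2T) with hp_def
  have hp : p ∈ mulH2 θ hθ := SetLike.coe_mem _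
  obtain ⟨g, hg, hpg⟩ : ∃ g ∈ H2, symbMul θ hθ g = p := by
    rw [mulH2_eq_map] at hp
    obtain ⟨g, hg, hgp⟩ := Submodule.mem_map.1 hp
    exact ⟨g, hg, hgp⟩
  refine ⟨h - p, g, ⟨?_, ?_⟩, hg, by rw [hpg]; abel⟩
  · exact Submodule.sub_mem _ hh (mulH2_le_H2 hin hp)
  · exact Submodule.sub_starProjection_mem_orthogonal h

/-- The function `z̄ = e⁻ⁱᵗ` as an `L²` element. -/
def em1 : L2T := (fourierLp 2 (-1) : L2T)

lemma em1_mem_orthogonal : em1 ∈ H2ᗮ := by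
  apply mem_H2_orthogonal
  intro n hn
  rw [em1, coefI_fourierLp]
  have : n ≠ -1 := by omega
  simp [this]

lemma onefun_mem_H2 : onefun ∈ H2 := by
  apply Submodule.le_topologicalClosure
  apply Submodule.subset_span
  exact ⟨0, by norm_num [onefun]⟩

lemma coefI_onefun (f : L2T) : ⟪onefun, f⟫ = coefI 0 f := rfl

lemma symbMul_sub (g : UnitCircle → ℂ) (hg : MemLp g ∞ μc) (f₁ f₂ : L2T) :
    symbMul g hg (f₁ - f₂) = symbMul g hg f₁ - symbMul g hg f₂ := by
  have := symbMul_add g hg (f₁ - f₂) f₂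
  rw [sub_add_cancel] at this
  rw [this]; abel

lemma zmul_mem_H2 {g : L2T} (hg : g ∈ H2) : symbMul zfun zfun_memLinfty g ∈ H2 := by
  refine memH2_iff.2 fun n hn => ?_
  rw [coefI_symbMul_z]
  exact memH2_iff.1 hg _ (by omega)

lemma Sstar_mem_H2 (f : L2T) : Sstar f ∈ H2 := SetLike.coe_mem _

/-- The representation `S* f = z̄ f - f̂(0) z̄` for `f ∈ H²`. -/
lemma Sstar_eq {f : L2T} (hf : f ∈ H2) :
    Sstar f = symbMul (fun x => conj (zfun x)) conj_zfun_memLinfty f - coefI 0 f • em1 := by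
  set w := symbMul (fun x => conj (zfun x)) conj_zfun_memLinfty f - coefI 0 f • em1 with hw
  have hwH2 : w ∈ H2 := by
    refine memH2_iff.2 fun n hn => ?_
    rw [hw, coefI_sub, coefI_symbMul_zbar, coefI_smul, em1, coefI_fourierLp]
    rcases eq_or_ne n (-1) with h | h
    · subst h; norm_num
    · have hn1 : n + 1 < 0 := by omega
      rw [memH2_iff.1 hf _ hn1]
      simp [h]
  have hrest : symbMul (fun x => conj (zfun x)) conj_zfun_memLinfty f - w ∈ H2ᗮ := by
    have h1 : symbMul (fun x => conj (zfun x)) conj_zfun_memLinfty f - w = coefI 0 f • em1 := by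
      rw [hw]; abel
    rw [h1]
    exact Submodule.smul_mem _ _ em1_mem_orthogonal
  have hsplit : symbMul (fun x => conj (zfun x)) conj_zfun_memLinfty f
      = w + (symbMul (fun x => conj (zfun x)) conj_zfun_memLinfty f - w) := by abel
  show (PH2 (symbMul (fun x => conj (zfun x)) conj_zfun_memLinfty f) : L2T) = w
  rw [hsplit, map_add, Submodule.coe_add, PH2_eq_self hwH2, PH2_eq_zero hrest, add_zero]

lemma memLinfty_mul {g g' : UnitCircle → ℂ} (hg : MemLp g ∞ μc) (hg' : MemLp g' ∞ μc) :
    MemLp (fun x => g x * g' x) ∞ μc := by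
  have := hg'.smul (φ := g) (r := ∞) hg
  exact this

/-- Multiplications by two symbols commute. -/
lemma symbMul_comm (g g' : UnitCircle → ℂ) (hg : MemLp g ∞ μc) (hg' : MemLp g' ∞ μc)
    (f : L2T) : symbMul g hg (symbMul g' hg' f) = symbMul g' hg' (symbMul g hg f) := by
  rw [symbMul_symbMul g g' hg hg' (memLinfty_mul hg hg'),
    symbMul_symbMul g' g hg' hg (memLinfty_mul hg' hg)]
  exact symbMul_congr (Filter.Eventually.of_forall fun x => mul_comm _ _) f

lemma zbar_z_cancel (f : L2T) :
    symbMul zfun zfun_memLinfty (symbMul (fun x => conj (zfun x)) conj_zfun_memLinfty f)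
      = f := by
  apply Lp.ext
  filter_upwards [symbMul_coeFn zfun zfun_memLinfty
      (symbMul (fun x => conj (zfun x)) conj_zfun_memLinfty f),
    symbMul_coeFn (fun x => conj (zfun x)) conj_zfun_memLinfty f] with x h1 h2
  rw [h1, h2, ← mul_assoc]
  have hz : zfun x * conj (zfun x) = 1 := by
    rw [Complex.mul_conj, Complex.normSq_eq_norm_sq]
    norm_num [zfun, Circle.norm_coe]
  rw [hz, one_mul]

lemma symbMul_z_em1 : symbMul zfun zfun_memLinfty em1 = onefun := by
  apply Lp.ext
  filter_upwards [symbMul_coeFn zfun zfun_memLinfty em1, coeFn_fourierLp (T := 2 * π) 2 (-1),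
    coeFn_fourierLp (T := 2 * π) 2 0] with x h1 h2 h3
  rw [h1]
  show zfun x * (em1 : UnitCircle → ℂ) x = (onefun : UnitCircle → ℂ) x
  rw [show ((em1 : UnitCircle → ℂ) x) = fourier (-1) x from h2,
    show ((onefun : UnitCircle → ℂ) x) = fourier 0 x from h3, zfun, ← fourier_add]
  norm_num

/-- The canonical splitting `f = f̂(0)·1 + z·(S*f)` for `f ∈ H²`. -/
lemma split_eq {f : L2T} (hf : f ∈ H2) :
    f = coefI 0 f • onefun + symbMul zfun zfun_memLinfty (Sstar f) := by
  rw [Sstar_eq hf, symbMul_sub, zbar_z_cancel, symbMul_smul, symbMul_z_em1]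
  abel

section ThetaLemmas

variable {θ : UnitCircle → ℂ} {hθ : MemLp θ ∞ μc}

lemma coefI_zero_symbMul (hin : IsInner θ hθ) {v : L2T} (hv : v ∈ H2) :
    coefI 0 (symbMul θ hθ v) = coefI 0 (symbMul θ hθ onefun) * coefI 0 v := by
  conv_lhs => rw [split_eq hv]
  rw [symbMul_add, symbMul_smul, coefI_add, coefI_smul,
    symbMul_comm θ zfun hθ zfun_memLinfty, coefI_symbMul_z]
  have h0 : coefI (0 - 1 : ℤ) (symbMul θ hθ (Sstar v)) = 0 :=
    memH2_iff.1 (hin.1 _ (Sstar_mem_H2 v)) _ (by norm_num)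
  rw [h0, add_zero, mul_comm]

lemma symbMul_theta_em1 (hin : IsInner θ hθ) :
    symbMul θ hθ em1
      = symbMul (fun x => conj (zfun x)) conj_zfun_memLinfty (symbMul θ hθ onefun) := by
  apply Lp.ext
  filter_upwards [symbMul_coeFn θ hθ em1,
    symbMul_coeFn (fun x => conj (zfun x)) conj_zfun_memLinfty (symbMul θ hθ onefun),
    symbMul_coeFn θ hθ onefun, coeFn_fourierLp (T := 2 * π) 2 (-1),
    coeFn_fourierLp (T := 2 * π) 2 0] with x h1 h2 h3 h4 h5
  rw [h1, h2, h3]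
  show θ x * (em1 : UnitCircle → ℂ) x
      = conj (zfun x) * (θ x * (onefun : UnitCircle → ℂ) x)
  rw [show ((em1 : UnitCircle → ℂ) x) = fourier (-1) x from h4,
    show ((onefun : UnitCircle → ℂ) x) = fourier 0 x from h5]
  rw [show ((fourier (-1) x : ℂ)) = conj (fourier 1 x) from by rw [← fourier_neg]]
  rw [fourier_zero]
  simp only [zfun]
  ring

/-- Key identity: `S*(θ v) = θ (S* v) + v̂(0) • S*θ` for `v ∈ H²`. -/
lemma Sstar_symbMul (hin : IsInner θ hθ) {v : L2T} (hv : v ∈ H2) :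
    Sstar (symbMul θ hθ v)
      = symbMul θ hθ (Sstar v) + coefI 0 v • Sstar (symbMul θ hθ onefun) := by
  have hθv : symbMul θ hθ v ∈ H2 := hin.1 v hv
  have hθ1 : symbMul θ hθ onefun ∈ H2 := hin.1 onefun onefun_mem_H2
  rw [Sstar_eq hθv, Sstar_eq hθ1, Sstar_eq hv, symbMul_sub, symbMul_smul,
    symbMul_comm (fun x => conj (zfun x)) θ conj_zfun_memLinfty hθ,
    symbMul_theta_em1 hin, coefI_zero_symbMul hin hv, smul_sub]
  module

lemma Toeplitz_conj_symbMul (hθc : MemLp (fun x => conj (θ x)) ∞ μc) (hin : IsInner θ hθ)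
    {f : L2T} (hf : f ∈ H2) :
    Toeplitz (fun x => conj (θ x)) hθc (symbMul θ hθ f) = f := by
  show (PH2 (symbMul _ hθc (symbMul θ hθ f)) : L2T) = f
  rw [symbMul_conj_symbMul hθc hin, PH2_eq_self hf]

lemma mem_mulH2_orthogonal_iff {x : L2T} :
    x ∈ (mulH2 θ hθ)ᗮ ↔ ∀ g ∈ H2, ⟪symbMul θ hθ g, x⟫ = 0 := by
  rw [mulH2, mem_span_orthogonal_iff]
  constructor
  · intro h g hg; exact h _ ⟨g, hg, rfl⟩
  · rintro h s ⟨g, hg, rfl⟩; exact h g hg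

lemma Toeplitz_conj_Kmodel (hθc : MemLp (fun x => conj (θ x)) ∞ μc)
    {k : L2T} (hk : k ∈ Kmodel θ hθ) :
    Toeplitz (fun x => conj (θ x)) hθc k = 0 := by
  show (PH2 (symbMul _ hθc k) : L2T) = 0
  apply PH2_eq_zero
  rw [Submodule.mem_orthogonal']
  intro w hw
  have hcc : MemLp (fun x => conj (conj (θ x))) ∞ μc := by simpa using hθ
  rw [inner_symbMul_left _ hθc hcc,
    symbMul_congr (g' := θ) (hg' := hθ) (Filter.Eventually.of_forall fun x => by simp) w,
    ← inner_conj_symm,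
    (Submodule.mem_orthogonal _ _).1 (Submodule.mem_inf.1 hk).2 _ (mem_mulH2 hw), map_zero]

lemma Sstar_mem_Kmodel_of (hin : IsInner θ hθ) {f : L2T} (hf : f ∈ H2)
    (hperp : ∀ g ∈ H2, ⟪symbMul θ hθ (symbMul zfun zfun_memLinfty g), f⟫ = 0) :
    Sstar f ∈ Kmodel θ hθ := by
  refine Submodule.mem_inf.2 ⟨Sstar_mem_H2 f, ?_⟩
  rw [mem_mulH2_orthogonal_iff]
  intro g hg
  rw [Sstar_eq hf, inner_sub_right, inner_smul_right]
  have hzz : MemLp (fun x => conj (conj (zfun x))) ∞ μc := by simpa using zfun_memLinfty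
  have h1 : ⟪symbMul θ hθ g, symbMul (fun x => conj (zfun x)) conj_zfun_memLinfty f⟫ = 0 := by
    rw [← inner_conj_symm,
      inner_symbMul_left _ conj_zfun_memLinfty hzz,
      symbMul_congr (g' := zfun) (hg' := zfun_memLinfty)
        (Filter.Eventually.of_forall fun x => by simp) (symbMul θ hθ g),
      symbMul_comm zfun θ zfun_memLinfty hθ,
      ← inner_conj_symm, hperp g hg, map_zero, map_zero]
  have h2 : ⟪symbMul θ hθ g, em1⟫ = 0 := by
    rw [← inner_conj_symm,
      (Submodule.mem_orthogonal' _ _).1 em1_mem_orthogonal _ (hin.1 g hg), map_zero]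
  rw [h1, h2, mul_zero, sub_zero]

lemma Sstar_Kmodel (hin : IsInner θ hθ) {k : L2T} (hk : k ∈ Kmodel θ hθ) :
    Sstar k ∈ Kmodel θ hθ :=
  Sstar_mem_Kmodel_of hin (Submodule.mem_inf.1 hk).1 fun g hg =>
    (Submodule.mem_orthogonal _ _).1 (Submodule.mem_inf.1 hk).2 _
      (mem_mulH2 (zmul_mem_H2 hg))

lemma Sstar_thetaone_Kmodel (hin : IsInner θ hθ) :
    Sstar (symbMul θ hθ onefun) ∈ Kmodel θ hθ := by
  apply Sstar_mem_Kmodel_of hin (hin.1 onefun onefun_mem_H2)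
  intro g hg
  rw [inner_symbMul_symbMul hin, ← inner_conj_symm, coefI_onefun, coefI_symbMul_z,
    memH2_iff.1 hg _ (by norm_num), map_zero]

end ThetaLemmas

end Aux

/-- For `θ` nonconstant inner, `‖u‖ = 1`, `θ ∣ u` and `1 + ⟨θv, u⟩ = 0`,
the kernel of `R₁f = T_θ̄ f + ⟨f,u⟩v` is `K_θ ⊕ ℂ(θv)`, and it is nearly `S*`-invariant with
the 1-dimensional defect space `F = ℂ·(θ S*v)`. -/
theorem kernel_rank_one_perturbation_conjugate_inner_divisible
    (θ : UnitCircle → ℂ) (hθ : MemLp θ ∞ μc) (hin : IsInner θ hθ)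
    (hnc : ∀ c : ℂ, ¬ (θ =ᵐ[μc] fun _ => c))
    (hθc : MemLp (fun x => conj (θ x)) ∞ μc)
    (u v : L2T) (hu : u ∈ H2) (hv : v ∈ H2) (hnu : ‖u‖ = 1)
    (hdvd : u ∈ mulH2 θ hθ)
    (hsum : 1 + ⟪u, symbMul θ hθ v⟫ = 0)
    (hSv : Sstar v ≠ 0) :
    {h : L2T | h ∈ H2 ∧ Toeplitz (fun x => conj (θ x)) hθc h + ⟪u, h⟫ • v = 0}
        = ((Kmodel θ hθ ⊔ Submodule.span ℂ {symbMul θ hθ v} : Submodule ℂ L2T) : Set L2T)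
    ∧ Module.finrank ℂ (Submodule.span ℂ {symbMul θ hθ (Sstar v)}) = 1
    ∧ ∀ h ∈ H2,
        (Toeplitz (fun x => conj (θ x)) hθc h + ⟪u, h⟫ • v = 0) → ev0 h = 0 →
        ∃ w ∈ Submodule.span ℂ {symbMul θ hθ (Sstar v)},
          Sstar h + w ∈ H2
          ∧ Toeplitz (fun x => conj (θ x)) hθc (Sstar h + w) + ⟪u, Sstar h + w⟫ • v = 0 := by
  have hθvH2 : symbMul θ hθ v ∈ H2 := hin.1 v hv
  have huv : ⟪u, symbMul θ hθ v⟫ = -1 := eq_neg_of_add_eq_zero_right hsum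
  -- every element of `K_θ + ℂ θv` is in the kernel
  have hKer_of : ∀ k, k ∈ Kmodel θ hθ → ∀ c : ℂ,
      (k + c • symbMul θ hθ v) ∈ H2 ∧
      Toeplitz (fun x => conj (θ x)) hθc (k + c • symbMul θ hθ v)
        + ⟪u, k + c • symbMul θ hθ v⟫ • v = 0 := by
    intro k hk c
    have hkH2 : k ∈ H2 := (Submodule.mem_inf.1 hk).1
    have huk : ⟪u, k⟫ = 0 :=
      (Submodule.mem_orthogonal _ _).1 (Submodule.mem_inf.1 hk).2 u hdvd
    refine ⟨Submodule.add_mem _ hkH2 (Submodule.smul_mem _ _ hθvH2), ?_⟩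
    rw [Toeplitz_add, Toeplitz_smul, Toeplitz_conj_Kmodel hθc hk,
      Toeplitz_conj_symbMul hθc hin hv, inner_add_right, inner_smul_right, huk, huv]
    module
  -- every kernel element decomposes as `k + c • θv`
  have hDecomp : ∀ h, h ∈ H2 →
      Toeplitz (fun x => conj (θ x)) hθc h + ⟪u, h⟫ • v = 0 →
      ∃ k, ∃ c : ℂ, k ∈ Kmodel θ hθ ∧ h = k + c • symbMul θ hθ v := by
    intro h hh hker
    obtain ⟨k, g, hk, hg, rfl⟩ := H2_decomp hin hh
    rw [Toeplitz_add, Toeplitz_conj_Kmodel hθc hk, Toeplitz_conj_symbMul hθc hin hg,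
      zero_add] at hker
    set c1 : ℂ := ⟪u, k + symbMul θ hθ g⟫ with hc1
    have hg_eq : g = (-c1) • v := by
      rw [neg_smul]
      exact eq_neg_of_add_eq_zero_left hker
    refine ⟨k, -c1, hk, ?_⟩
    have h2 : symbMul θ hθ g = (-c1) • symbMul θ hθ v := by
      conv_lhs => rw [hg_eq]
      rw [symbMul_smul]
    rw [h2]
  refine ⟨?_, ?_, ?_⟩
  · ext h
    simp only [Set.mem_setOf_eq, SetLike.mem_coe]
    constructor
    · rintro ⟨hh, hker⟩
      obtain ⟨k, c, hk, hrep⟩ := hDecomp h hh hker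
      rw [hrep]
      exact Submodule.add_mem _ (Submodule.mem_sup_left hk)
        (Submodule.mem_sup_right (Submodule.smul_mem _ _ (Submodule.mem_span_singleton_self _)))
    · intro hmem
      obtain ⟨k, hk, y, hy, rfl⟩ := Submodule.mem_sup.1 hmem
      obtain ⟨c, rfl⟩ := Submodule.mem_span_singleton.1 hy
      exact hKer_of k hk c
  · have hθSv : symbMul θ hθ (Sstar v) ≠ 0 := by
      intro h0
      apply hSv
      have hss := symbMul_conj_symbMul hθc hin (Sstar v)
      rw [h0, symbMul_zero] at hss
      exact hss.symm
    exact finrank_span_singleton hθSv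
  · intro h hh hker _hev
    obtain ⟨k, c, hk, hrep⟩ := hDecomp h hh hker
    refine ⟨(-c) • symbMul θ hθ (Sstar v),
      Submodule.smul_mem _ _ (Submodule.mem_span_singleton_self _), ?_⟩
    have hSh : Sstar h + (-c) • symbMul θ hθ (Sstar v)
        = Sstar k + (c * coefI 0 v) • Sstar (symbMul θ hθ onefun) := by
      rw [hrep]
      have hlin : Sstar (k + c • symbMul θ hθ v)
          = Sstar k + c • Sstar (symbMul θ hθ v) := by
        unfold Sstar
        rw [Toeplitz_add, Toeplitz_smul]
      rw [hlin, Sstar_symbMul hin hv, smul_add, smul_smul]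
      module
    set k' := Sstar k + (c * coefI 0 v) • Sstar (symbMul θ hθ onefun) with hk'def
    have hk' : k' ∈ Kmodel θ hθ :=
      Submodule.add_mem _ (Sstar_Kmodel hin hk)
        (Submodule.smul_mem _ _ (Sstar_thetaone_Kmodel hin))
    have h0 := hKer_of k' hk' 0
    rw [zero_smul, add_zero] at h0
    rw [hSh]
    exact h0
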